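/- arXiv:2604.20440 — 7 statements merged into one kernel-verified Lean document; each statement's English description precedes it below -/
import Mathlib

section
/- There do not exist positive real numbers a, b, c such that both f_1(a,b,c) ≤ 0 and f_2(a,b,c) ≤ 0, where f_1(a,b,c) = -3a^4b + 6a^4c + 27a^3c^2 + 24a^2b^2c + 24a^2bc^2 + 48a^2c^3 + 72ab^2c^2 + 60abc^3 + 24ac^4 + 72b^2c^3 + 24bc^4 and f_2(a,b,c) = 3a^5b - 6a^5c - 21a^4c^2 - 24a^3b^2c - 28a^3c^3 - 54a^2b^2c^2 + 12a^2bc^3 - 24a^2c^4 - 36ab^2c^3 + 6abc^4 - 12ac^5 - 12b^2c^4 - 2c^6. -/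
theorem stmt_2 :
    ¬ ∃ a b c : ℝ, 0 < a ∧ 0 < b ∧ 0 < c ∧
      (-3*a^4*b + 6*a^4*c + 27*a^3*c^2 + 24*a^2*b^2*c + 24*a^2*b*c^2 + 48*a^2*c^3 +
        72*a*b^2*c^2 + 60*a*b*c^3 + 24*a*c^4 + 72*b^2*c^3 + 24*b*c^4 ≤ 0) ∧
      (3*a^5*b - 6*a^5*c - 21*a^4*c^2 - 24*a^3*b^2*c - 28*a^3*c^3 - 54*a^2*b^2*c^2 +
        12*a^2*b*c^3 - 24*a^2*c^4 - 36*a*b^2*c^3 + 6*a*b*c^4 - 12*a*c^5 - 12*b^2*c^4 - 2*c^6 ≤ 0) := by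
  rintro ⟨a, b, c, ha, hb, hc, h1, h2⟩
  have hbc : 2 * c ≤ b := by
    nlinarith [pow_pos ha 4, pow_pos ha 3, pow_pos ha 2, mul_pos hb hc, pow_pos hc 2,
      pow_pos hc 3, pow_pos hc 4, mul_pos ha hc, mul_pos (mul_pos ha hb) hc,
      mul_pos (mul_pos hb hb) hc, sq_nonneg (a*b), sq_nonneg (b*c)]
  have hab : 8 * (b * c) ≤ a ^ 2 := by
    nlinarith [pow_pos ha 4, pow_pos ha 3, pow_pos ha 2, mul_pos hb hc, pow_pos hc 2,
      pow_pos hc 3, pow_pos hc 4, mul_pos ha hc, mul_pos (mul_pos ha hb) hc,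
      mul_pos (mul_pos hb hb) hc, mul_pos (mul_pos ha ha) hb,
      mul_pos (mul_pos ha ha) (mul_pos hb hc)]
  have hab16 : 16 * c ^ 2 ≤ a ^ 2 := by nlinarith [mul_pos hc hc]
  have ha4 : 4 * c ≤ a := by nlinarith [mul_pos hc hc]
  nlinarith [mul_nonneg ha.le (neg_nonneg.mpr h1), h2,
    mul_nonneg (mul_nonneg (mul_nonneg hc.le hc.le) (sub_nonneg.mpr hab16)) (mul_nonneg ha.le hc.le),
    mul_nonneg (mul_nonneg (mul_nonneg hc.le hc.le) (sub_nonneg.mpr ha4)) (mul_nonneg (mul_nonneg hb.le hb.le) hc.le),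
    mul_nonneg (mul_nonneg (mul_nonneg hc.le hc.le) (sub_nonneg.mpr hab16)) (mul_nonneg ha.le ha.le),
    mul_nonneg (mul_nonneg (mul_nonneg hc.le hc.le) (sub_nonneg.mpr hab16)) (mul_nonneg hc.le hc.le),
    mul_nonneg (mul_nonneg (mul_nonneg hc.le hc.le) (sub_nonneg.mpr hbc)) (mul_nonneg (mul_nonneg ha.le ha.le) hc.le),
    mul_pos (mul_pos (mul_pos ha ha) (mul_pos ha ha)) (mul_pos hc hc),
    mul_pos (mul_pos (mul_pos ha ha) (mul_pos ha hb)) (mul_pos hc hc),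
    mul_pos (mul_pos (mul_pos ha ha) (mul_pos ha hc)) (mul_pos hc hc),
    mul_pos (mul_pos (mul_pos ha ha) (mul_pos hb hb)) (mul_pos hc hc),
    mul_pos (mul_pos (mul_pos ha ha) (mul_pos hb hc)) (mul_pos hc hc),
    mul_pos (mul_pos (mul_pos ha hb) (mul_pos hb hc)) (mul_pos hc hc),
    mul_pos (mul_pos (mul_pos ha hb) (mul_pos hc hc)) (mul_pos hc hc)]
end

section
/- Let f(u) be the piecewise function on [0, 4] defined by f(u) = 40 - 4u^3 - 6u^2 - 3u for 0 ≤ u ≤ 1 (and, extending to -1/2 ≤ u ≤ 1, the same formula), and f(u) = (4-u)^3 for 1 ≤ u ≤ 4. Then for every rational b with -1 < b < 1/2, the quantity 1 + b + φ(b)·∫_{-b}^{4} f(u) du equals 9(b+1)(4b^5 - 16b^4 - 50b^3 - 14b^2 + 119b - 140) / (2(4b^3 - 6b^2 + 3b + 40)^2), where φ(b) = -2(b+1)(8b^2 - 17b + 20) / (4b^3 - 6b^2 + 3b + 40)^2. Moreover this quantity is strictly negative for all such b. -/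
/-!
On `[-b, 1]` the volume is a cubic polynomial and on `[1, 4]` it is `(4 - u)^3`, so the integral
is a quartic in `b` and the identity is an identity of rational functions. For the sign, the
denominator `4b^3 - 6b^2 + 3b + 40 = ((2b - 1)^3 + 81) / 2` is positive for `b > -1`, so the sign
is that of `(b + 1)` times the quintic, which is negative on `(-1, 1/2)`.
-/

/-- vol(-K_X - uS) for Family 2.28. -/
noncomputable def volF228 (u : ℝ) : ℝ :=
  if u ≤ 1 then 40 - 4*u^3 - 6*u^2 - 3*u else (4 - u)^3

open intervalIntegral

lemma volF228_of_le_one {u : ℝ} (hu : u ≤ 1) : volF228 u = 40 - 4*u^3 - 6*u^2 - 3*u :=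
  if_pos hu

lemma volF228_of_one_le {u : ℝ} (hu : 1 ≤ u) : volF228 u = (4 - u)^3 := by
  rcases hu.lt_or_eq with hu | rfl
  · exact if_neg hu.not_ge
  · norm_num [volF228]

lemma continuous_volF228 : Continuous volF228 :=
  Continuous.if_le (by fun_prop) (by fun_prop) continuous_id continuous_const
    (fun u hu => by subst hu; norm_num)

lemma integral_volF228_lower_branch (a c : ℝ) :
    ∫ u in a..c, (40 - 4*u^3 - 6*u^2 - 3*u) =
      (40*c - c^4 - 2*c^3 - 3/2*c^2) - (40*a - a^4 - 2*a^3 - 3/2*a^2) := by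
  rw [integral_sub, integral_sub, integral_sub, integral_const_mul 3 (fun u => u)]
  all_goals try exact (by fun_prop : Continuous _).intervalIntegrable _ _
  simp only [integral_const, smul_eq_mul, integral_const_mul, integral_pow, Nat.reduceAdd,
    Nat.cast_ofNat, integral_id]
  ring

lemma integral_volF228_of_le_one {a : ℝ} (ha : a ≤ 1) :
    ∫ u in a..4, volF228 u = a^4 + 2*a^3 + 3/2*a^2 - 40*a + 223/4 := by
  have hi := continuous_volF228.intervalIntegrable (μ := MeasureTheory.volume)
  have h_left : ∫ u in a..1, volF228 u = ∫ u in a..1, (40 - 4*u^3 - 6*u^2 - 3*u) :=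
    integral_congr fun u hu => volF228_of_le_one (by simpa [ha] using hu.2)
  have h_right : ∫ u in (1:ℝ)..4, volF228 u = ∫ u in (1:ℝ)..4, (4 - u)^3 :=
    integral_congr fun u hu => volF228_of_one_le (by norm_num at hu; exact hu.1)
  rw [← integral_add_adjacent_intervals (hi a 1) (hi 1 4), h_left, h_right,
    integral_volF228_lower_branch, integral_comp_sub_left (fun u : ℝ => u^3), integral_pow]
  ring

lemma beta_denominator_pos {x : ℝ} (hx : -1 < x) : 0 < 4*x^3 - 6*x^2 + 3*x + 40 := by
  have hfactor : 0 < (x + 1) * ((2*x - 1)^2 - 3*(2*x - 1) + 9) :=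
    mul_pos (by linarith) (by nlinarith [sq_nonneg (2*x - 5/2)])
  nlinarith

lemma beta_quintic_neg {x : ℝ} (hx1 : -1 < x) (hx2 : x < 1/2) :
    4*x^5 - 16*x^4 - 50*x^3 - 14*x^2 + 119*x - 140 < 0 := by
  nlinarith [mul_pos (by linarith : (0:ℝ) < x + 1) (by linarith : (0:ℝ) < 1/2 - x),
    sq_nonneg x, sq_nonneg (x^2 - 1)]

theorem stmt_6 (b : ℚ) (hb1 : -1 < b) (hb2 : b < 1/2) :
    (1 + (b : ℝ) +
      (-2*((b : ℝ) + 1)*(8*(b : ℝ)^2 - 17*(b : ℝ) + 20) /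
        (4*(b : ℝ)^3 - 6*(b : ℝ)^2 + 3*(b : ℝ) + 40)^2) *
      ∫ u in (-(b : ℝ))..4, volF228 u) =
      9*((b : ℝ) + 1)*(4*(b : ℝ)^5 - 16*(b : ℝ)^4 - 50*(b : ℝ)^3 - 14*(b : ℝ)^2 +
        119*(b : ℝ) - 140) / (2*(4*(b : ℝ)^3 - 6*(b : ℝ)^2 + 3*(b : ℝ) + 40)^2) ∧
    (1 + (b : ℝ) +
      (-2*((b : ℝ) + 1)*(8*(b : ℝ)^2 - 17*(b : ℝ) + 20) /
        (4*(b : ℝ)^3 - 6*(b : ℝ)^2 + 3*(b : ℝ) + 40)^2) *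
      ∫ u in (-(b : ℝ))..4, volF228 u) < 0 := by
  have hx1 : (-1 : ℝ) < b := by exact_mod_cast hb1
  have hx2 : (b : ℝ) < 1/2 := by simpa using (Rat.cast_lt (K := ℝ)).mpr hb2
  set x : ℝ := (b : ℝ)
  have hD := beta_denominator_pos hx1
  have heq : 1 + x + (-2*(x + 1)*(8*x^2 - 17*x + 20) / (4*x^3 - 6*x^2 + 3*x + 40)^2) *
      ∫ u in (-x)..4, volF228 u =
      9*(x + 1)*(4*x^5 - 16*x^4 - 50*x^3 - 14*x^2 + 119*x - 140) /
        (2*(4*x^3 - 6*x^2 + 3*x + 40)^2) := by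
    rw [integral_volF228_of_le_one (by linarith)]
    have hD2 : (4*x^3 - 6*x^2 + 3*x + 40)^2 ≠ 0 := by positivity
    rw [div_mul_eq_mul_div, add_div' _ _ _ hD2, div_eq_div_iff hD2 (by positivity)]
    ring
  refine ⟨heq, heq ▸ div_neg_of_neg_of_pos ?_ (by positivity)⟩
  nlinarith [mul_pos (by linarith : (0:ℝ) < x + 1) (neg_pos.mpr (beta_quintic_neg hx1 hx2))]
end

section
/- There do not exist positive real numbers a_1, a_2, a_3, a_4 with a_2 ≤ a_3 such that both f_1(a_1,a_2,a_3,a_4) ≤ 0 and f_2(a_1,a_2,a_3,a_4) ≤ 0, where f_1 = 18a_1^2a_2^2a_3 + 18a_1^2a_2a_3^2 + 54a_1^2a_2a_3a_4 + 12a_1^2a_2a_4^2 + 12a_1^2a_3a_4^2 + 6a_1^2a_4^3 + 18a_1a_2^2a_3a_4 - 6a_1a_2^2a_4^2 + 18a_1a_2a_3^2a_4 + 48a_1a_2a_3a_4^2 - 6a_1a_3^2a_4^2 + 12a_2^2a_3a_4^2 + 12a_2a_3^2a_4^2 + 24a_2a_3a_4^3 + 3a_2a_4^4 + 3a_3a_4^4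 + a_4^5 and f_2 = 12a_1^2a_2^4 - 24a_1^2a_2^3a_3 + 24a_1^2a_2^3a_4 - 54a_1^2a_2^2a_3a_4 + 18a_1^2a_2a_3^2a_4 - 18a_1^2a_2a_3a_4^2 - 12a_1^2a_2a_4^3 - 12a_1^2a_3a_4^3 - 6a_1^2a_4^4 + 18a_1a_2^4a_4 - 36a_1a_2^3a_3a_4 + 30a_1a_2^3a_4^2 + 18a_1a_2^2a_3^2a_4 - 54a_1a_2^2a_3a_4^2 + 6a_1a_2^2a_4^3 + 36a_1a_2a_3^2a_4^2 + 6a_1a_3^2a_4^3 + 12a_2^4a_4^2 - 24a_2^3a_3a_4^2 + 14a_2^3a_4^3 - 36a_2^2a_3a_4^3 + 6a_2a_3^2a_4^3 - 12a_2a_3a_4^4 - 3a_2a_4^5 - 3a_3a_4^5 - a_4^6. -/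
set_option maxHeartbeats 1000000


theorem stmt_12 :
    ¬ ∃ a1 a2 a3 a4 : ℝ, 0 < a1 ∧ 0 < a2 ∧ 0 < a3 ∧ 0 < a4 ∧ a2 ≤ a3 ∧
      (18*a1^2*a2^2*a3 + 18*a1^2*a2*a3^2 + 54*a1^2*a2*a3*a4 + 12*a1^2*a2*a4^2 +
        12*a1^2*a3*a4^2 + 6*a1^2*a4^3 + 18*a1*a2^2*a3*a4 - 6*a1*a2^2*a4^2 +
        18*a1*a2*a3^2*a4 + 48*a1*a2*a3*a4^2 - 6*a1*a3^2*a4^2 + 12*a2^2*a3*a4^2 +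
        12*a2*a3^2*a4^2 + 24*a2*a3*a4^3 + 3*a2*a4^4 + 3*a3*a4^4 + a4^5 ≤ 0) ∧
      (12*a1^2*a2^4 - 24*a1^2*a2^3*a3 + 24*a1^2*a2^3*a4 - 54*a1^2*a2^2*a3*a4 +
        18*a1^2*a2*a3^2*a4 - 18*a1^2*a2*a3*a4^2 - 12*a1^2*a2*a4^3 - 12*a1^2*a3*a4^3 -
        6*a1^2*a4^4 + 18*a1*a2^4*a4 - 36*a1*a2^3*a3*a4 + 30*a1*a2^3*a4^2 +
        18*a1*a2^2*a3^2*a4 - 54*a1*a2^2*a3*a4^2 + 6*a1*a2^2*a4^3 + 36*a1*a2*a3^2*a4^2 +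
        6*a1*a3^2*a4^3 + 12*a2^4*a4^2 - 24*a2^3*a3*a4^2 + 14*a2^3*a4^3 -
        36*a2^2*a3*a4^3 + 6*a2*a3^2*a4^3 - 12*a2*a3*a4^4 - 3*a2*a4^5 - 3*a3*a4^5 - a4^6 ≤ 0) := by
  rintro ⟨a1, a2, a3, a4, h1, h2, h3, h4, h23, hf1, hf2⟩
  set F1 : ℝ := 18*a1^2*a2^2*a3 + 18*a1^2*a2*a3^2 + 54*a1^2*a2*a3*a4 + 12*a1^2*a2*a4^2 +
        12*a1^2*a3*a4^2 + 6*a1^2*a4^3 + 18*a1*a2^2*a3*a4 - 6*a1*a2^2*a4^2 +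
        18*a1*a2*a3^2*a4 + 48*a1*a2*a3*a4^2 - 6*a1*a3^2*a4^2 + 12*a2^2*a3*a4^2 +
        12*a2*a3^2*a4^2 + 24*a2*a3*a4^3 + 3*a2*a4^4 + 3*a3*a4^4 + a4^5 with hF1
  set F2 : ℝ := 12*a1^2*a2^4 - 24*a1^2*a2^3*a3 + 24*a1^2*a2^3*a4 - 54*a1^2*a2^2*a3*a4 +
        18*a1^2*a2*a3^2*a4 - 18*a1^2*a2*a3*a4^2 - 12*a1^2*a2*a4^3 - 12*a1^2*a3*a4^3 -
        6*a1^2*a4^4 + 18*a1*a2^4*a4 - 36*a1*a2^3*a3*a4 + 30*a1*a2^3*a4^2 +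
        18*a1*a2^2*a3^2*a4 - 54*a1*a2^2*a3*a4^2 + 6*a1*a2^2*a4^3 + 36*a1*a2*a3^2*a4^2 +
        6*a1*a3^2*a4^3 + 12*a2^4*a4^2 - 24*a2^3*a3*a4^2 + 14*a2^3*a4^3 -
        36*a2^2*a3*a4^3 + 6*a2*a3^2*a4^3 - 12*a2*a3*a4^4 - 3*a2*a4^5 - 3*a3*a4^5 - a4^6 with hF2
  have hP : (0:ℝ) < a2*a4^5 + 15*a2*a3*a4^4 + 18*a2*a3^2*a4^3 + 3*a2^2*a4^4 + 14*a2^3*a4^3 +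
      12*a2^4*a4^2 + 48*a1*a2*a3*a4^3 + 48*a1*a2*a3^2*a4^2 + 12*a1*a2^2*a3*a4^2 +
      18*a1*a2^2*a3^2*a4 + 24*a1*a2^3*a4^2 + 18*a1*a2^4*a4 + 6*a1^2*a2*a4^3 +
      48*a1^2*a2*a3*a4^2 + 36*a1^2*a2*a3^2*a4 + 12*a1^2*a2^2*a4^2 + 18*a1^2*a2^2*a3*a4 +
      12*a1^2*a2^2*a3^2 + 24*a1^2*a2^3*a4 + 12*a1^2*a2^4 := by positivity
  have hQ : (0:ℝ) ≤ (a3 - a2) * (6*a1^2*a2^2*a3 + 18*a1*a2^2*a3*a4 + 12*a2^2*a3*a4^2) := by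
    have : (0:ℝ) ≤ a3 - a2 := by linarith
    positivity
  have hkey : (0:ℝ) < (a2 + a4) * F1 + F2 := by
    have he : (a2 + a4) * F1 + F2 =
        (a3 - a2) * (6*a1^2*a2^2*a3 + 18*a1*a2^2*a3*a4 + 12*a2^2*a3*a4^2) +
        (a2*a4^5 + 15*a2*a3*a4^4 + 18*a2*a3^2*a4^3 + 3*a2^2*a4^4 + 14*a2^3*a4^3 +
        12*a2^4*a4^2 + 48*a1*a2*a3*a4^3 + 48*a1*a2*a3^2*a4^2 + 12*a1*a2^2*a3*a4^2 +
        18*a1*a2^2*a3^2*a4 + 24*a1*a2^3*a4^2 + 18*a1*a2^4*a4 + 6*a1^2*a2*a4^3 +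
        48*a1^2*a2*a3*a4^2 + 36*a1^2*a2*a3^2*a4 + 12*a1^2*a2^2*a4^2 + 18*a1^2*a2^2*a3*a4 +
        12*a1^2*a2^2*a3^2 + 24*a1^2*a2^3*a4 + 12*a1^2*a2^4) := by
      rw [hF1, hF2]; ring
    rw [he]; linarith
  have h24 : (0:ℝ) < a2 + a4 := by linarith
  have := mul_nonpos_of_nonneg_of_nonpos h24.le hf1
  linarith
end

section
/- For all real numbers a_1, a_2, a_3, a_4 with a_4 > 0, a_1 > 0, and a_1 ≤ a_2 ≤ a_3, one has f_1(a_1,a_2,a_3,a_4) > 0, where f_1 = 18a_1^2a_2^2a_3 + 18a_1^2a_2a_3^2 + 54a_1^2a_2a_3a_4 + 12a_1^2a_2a_4^2 + 12a_1^2a_3a_4^2 + 6a_1^2a_4^3 + 18a_1a_2^2a_3a_4 - 6a_1a_2^2a_4^2 + 18a_1a_2a_3^2a_4 + 48a_1a_2a_3a_4^2 - 6a_1a_3^2a_4^2 + 12a_2^2a_3a_4^2 + 12a_2a_3^2a_4^2 + 24a_2a_3a_4^3 + 3a_2a_4^4 + 3a_3a_4^4 + a_4^5. -/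
theorem stmt_13 (a1 a2 a3 a4 : ℝ) (h4 : 0 < a4) (h1 : 0 < a1)
    (h12 : a1 ≤ a2) (h23 : a2 ≤ a3) :
    0 < 18*a1^2*a2^2*a3 + 18*a1^2*a2*a3^2 + 54*a1^2*a2*a3*a4 + 12*a1^2*a2*a4^2 +
        12*a1^2*a3*a4^2 + 6*a1^2*a4^3 + 18*a1*a2^2*a3*a4 - 6*a1*a2^2*a4^2 +
        18*a1*a2*a3^2*a4 + 48*a1*a2*a3*a4^2 - 6*a1*a3^2*a4^2 + 12*a2^2*a3*a4^2 +
        12*a2*a3^2*a4^2 + 24*a2*a3*a4^3 + 3*a2*a4^4 + 3*a3*a4^4 + a4^5 := by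
  have hd1 : (0:ℝ) ≤ a2 - a1 := by linarith
  have hd2 : (0:ℝ) ≤ a3 - a2 := by linarith
  have k0 : (0:ℝ) ≤ (a3-a2)*a4^4 := mul_nonneg (hd2) (pow_nonneg h4.le 4)
  have k1 : (0:ℝ) ≤ (a2-a1)*a4^4 := mul_nonneg (hd1) (pow_nonneg h4.le 4)
  have k2 : (0:ℝ) ≤ (a2-a1)*(a3-a2)*a4^3 := mul_nonneg (mul_nonneg (hd1) (hd2)) (pow_nonneg h4.le 3)
  have k3 : (0:ℝ) ≤ (a2-a1)*(a3-a2)^2*a4^2 := mul_nonneg (mul_nonneg (hd1) (pow_nonneg hd2 2)) (pow_nonneg h4.le 2)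
  have k4 : (0:ℝ) ≤ (a2-a1)^2*a4^3 := mul_nonneg (pow_nonneg hd1 2) (pow_nonneg h4.le 3)
  have k5 : (0:ℝ) ≤ (a2-a1)^2*(a3-a2)*a4^2 := mul_nonneg (mul_nonneg (pow_nonneg hd1 2) (hd2)) (pow_nonneg h4.le 2)
  have k6 : (0:ℝ) ≤ (a2-a1)^3*a4^2 := mul_nonneg (pow_nonneg hd1 3) (pow_nonneg h4.le 2)
  have k7 : (0:ℝ) ≤ a1*a4^4 := mul_nonneg (h1.le) (pow_nonneg h4.le 4)
  have k8 : (0:ℝ) ≤ a1*(a3-a2)*a4^3 := mul_nonneg (mul_nonneg (h1.le) (hd2)) (pow_nonneg h4.le 3)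
  have k9 : (0:ℝ) ≤ a1*(a3-a2)^2*a4^2 := mul_nonneg (mul_nonneg (h1.le) (pow_nonneg hd2 2)) (pow_nonneg h4.le 2)
  have k10 : (0:ℝ) ≤ a1*(a2-a1)*a4^3 := mul_nonneg (mul_nonneg (h1.le) (hd1)) (pow_nonneg h4.le 3)
  have k11 : (0:ℝ) ≤ a1*(a2-a1)*(a3-a2)*a4^2 := mul_nonneg (mul_nonneg (mul_nonneg (h1.le) (hd1)) (hd2)) (pow_nonneg h4.le 2)
  have k12 : (0:ℝ) ≤ a1*(a2-a1)*(a3-a2)^2*a4 := mul_nonneg (mul_nonneg (mul_nonneg (h1.le) (hd1)) (pow_nonneg hd2 2)) (h4.le)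
  have k13 : (0:ℝ) ≤ a1*(a2-a1)^2*a4^2 := mul_nonneg (mul_nonneg (h1.le) (pow_nonneg hd1 2)) (pow_nonneg h4.le 2)
  have k14 : (0:ℝ) ≤ a1*(a2-a1)^2*(a3-a2)*a4 := mul_nonneg (mul_nonneg (mul_nonneg (h1.le) (pow_nonneg hd1 2)) (hd2)) (h4.le)
  have k15 : (0:ℝ) ≤ a1*(a2-a1)^3*a4 := mul_nonneg (mul_nonneg (h1.le) (pow_nonneg hd1 3)) (h4.le)
  have k16 : (0:ℝ) ≤ a1^2*a4^3 := mul_nonneg (pow_nonneg h1.le 2) (pow_nonneg h4.le 3)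
  have k17 : (0:ℝ) ≤ a1^2*(a3-a2)*a4^2 := mul_nonneg (mul_nonneg (pow_nonneg h1.le 2) (hd2)) (pow_nonneg h4.le 2)
  have k18 : (0:ℝ) ≤ a1^2*(a3-a2)^2*a4 := mul_nonneg (mul_nonneg (pow_nonneg h1.le 2) (pow_nonneg hd2 2)) (h4.le)
  have k19 : (0:ℝ) ≤ a1^2*(a2-a1)*a4^2 := mul_nonneg (mul_nonneg (pow_nonneg h1.le 2) (hd1)) (pow_nonneg h4.le 2)
  have k20 : (0:ℝ) ≤ a1^2*(a2-a1)*(a3-a2)*a4 := mul_nonneg (mul_nonneg (mul_nonneg (pow_nonneg h1.le 2) (hd1)) (hd2)) (h4.le)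
  have k21 : (0:ℝ) ≤ a1^2*(a2-a1)*(a3-a2)^2 := mul_nonneg (mul_nonneg (pow_nonneg h1.le 2) (hd1)) (pow_nonneg hd2 2)
  have k22 : (0:ℝ) ≤ a1^2*(a2-a1)^2*a4 := mul_nonneg (mul_nonneg (pow_nonneg h1.le 2) (pow_nonneg hd1 2)) (h4.le)
  have k23 : (0:ℝ) ≤ a1^2*(a2-a1)^2*(a3-a2) := mul_nonneg (mul_nonneg (pow_nonneg h1.le 2) (pow_nonneg hd1 2)) (hd2)
  have k24 : (0:ℝ) ≤ a1^2*(a2-a1)^3 := mul_nonneg (pow_nonneg h1.le 2) (pow_nonneg hd1 3)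
  have k25 : (0:ℝ) ≤ a1^3*a4^2 := mul_nonneg (pow_nonneg h1.le 3) (pow_nonneg h4.le 2)
  have k26 : (0:ℝ) ≤ a1^3*(a3-a2)*a4 := mul_nonneg (mul_nonneg (pow_nonneg h1.le 3) (hd2)) (h4.le)
  have k27 : (0:ℝ) ≤ a1^3*(a3-a2)^2 := mul_nonneg (pow_nonneg h1.le 3) (pow_nonneg hd2 2)
  have k28 : (0:ℝ) ≤ a1^3*(a2-a1)*a4 := mul_nonneg (mul_nonneg (pow_nonneg h1.le 3) (hd1)) (h4.le)
  have k29 : (0:ℝ) ≤ a1^3*(a2-a1)*(a3-a2) := mul_nonneg (mul_nonneg (pow_nonneg h1.le 3) (hd1)) (hd2)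
  have k30 : (0:ℝ) ≤ a1^3*(a2-a1)^2 := mul_nonneg (pow_nonneg h1.le 3) (pow_nonneg hd1 2)
  have k31 : (0:ℝ) ≤ a1^4*a4 := mul_nonneg (pow_nonneg h1.le 4) (h4.le)
  have k32 : (0:ℝ) ≤ a1^4*(a3-a2) := mul_nonneg (pow_nonneg h1.le 4) (hd2)
  have k33 : (0:ℝ) ≤ a1^4*(a2-a1) := mul_nonneg (pow_nonneg h1.le 4) (hd1)
  have k34 : (0:ℝ) ≤ a1^5 := pow_nonneg h1.le 5
  have kp : (0:ℝ) < a4^5 := pow_pos h4 5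
  linarith [k0, k1, k2, k3, k4, k5, k6, k7, k8, k9, k10, k11, k12, k13, k14, k15, k16, k17, k18, k19, k20, k21, k22, k23, k24, k25, k26, k27, k28, k29, k30, k31, k32, k33, k34, kp]
end

section
/- There do not exist positive real numbers a, b, c, d such that both f_1(a,b,c,d) ≤ 0 and f_2(a,b,c,d) ≤ 0, where f_1 and f_2 are the Family 4.9 polynomials: f_1 = a^4c - a^4d + 3a^3b^2 + 8a^3bc - 5a^3bd + 4a^2b^3 + 12a^2b^2c + 2a^2b^2d + 8a^2bc^2 + 12a^2bcd - 4a^2c^2d + 4a^2cd^2 + 6ab^3d + 18ab^2cd + 6ab^2d^2 + 12abc^2d + 18abcd^2 + 6b^3d^2 + 18b^2cd^2 + 12bc^2d^2 and f_2 = -3a^5c + 3a^5d + 3a^4b^2 - 12a^4bc + 15a^4bd + 4a^3b^3 - 24a^3b^2c + 42a^3b^2d + 12a^3bc^2 + 12a^3bcd + 12a^3c^2d - 12a^3cd^2 - 24a^2b^3c + 42a^2b^3d + 18a^2b^2cd + 18a^2b^2d^2 + 72a^2bc^2d - 18a^2bcd^2 + 12ab^4d + 18ab^3d^2 + 36ab^2c^2d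 - 18ab^2cd^2 + 36abc^2d^2 - 24b^3cd^2. -/
set_option maxHeartbeats 2000000 in
theorem stmt_16 :
    ¬ ∃ a b c d : ℝ, 0 < a ∧ 0 < b ∧ 0 < c ∧ 0 < d ∧
      (a^4*c - a^4*d + 3*a^3*b^2 + 8*a^3*b*c - 5*a^3*b*d + 4*a^2*b^3 + 12*a^2*b^2*c +
        2*a^2*b^2*d + 8*a^2*b*c^2 + 12*a^2*b*c*d - 4*a^2*c^2*d + 4*a^2*c*d^2 +
        6*a*b^3*d + 18*a*b^2*c*d + 6*a*b^2*d^2 + 12*a*b*c^2*d + 18*a*b*c*d^2 +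
        6*b^3*d^2 + 18*b^2*c*d^2 + 12*b*c^2*d^2 ≤ 0) ∧
      (-3*a^5*c + 3*a^5*d + 3*a^4*b^2 - 12*a^4*b*c + 15*a^4*b*d + 4*a^3*b^3 -
        24*a^3*b^2*c + 42*a^3*b^2*d + 12*a^3*b*c^2 + 12*a^3*b*c*d + 12*a^3*c^2*d -
        12*a^3*c*d^2 - 24*a^2*b^3*c + 42*a^2*b^3*d + 18*a^2*b^2*c*d + 18*a^2*b^2*d^2 +
        72*a^2*b*c^2*d - 18*a^2*b*c*d^2 + 12*a*b^4*d + 18*a*b^3*d^2 + 36*a*b^2*c^2*d -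
        18*a*b^2*c*d^2 + 36*a*b*c^2*d^2 - 24*b^3*c*d^2 ≤ 0) := by
  rintro ⟨a, b, c, d, ha, hb, hc, hd, h1, h2⟩
  rcases le_total a b with hab | hba
  · -- case a ≤ b : f₁ > 0
    obtain ⟨e, he, rfl⟩ : ∃ e, 0 ≤ e ∧ b = a + e := ⟨b - a, by linarith, by ring⟩
    have hQ0 : (0:ℝ) < 7*a^5 + 21*a^4*c + 2*a^4*d + 8*a^3*c^2 + 30*a^3*c*d + 12*a^3*d^2
        + 8*a^2*c^2*d + 40*a^2*c*d^2 + 12*a*c^2*d^2 := by positivity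
    have t1 : (0:ℝ) ≤ e * (18*a^4 + 32*a^3*c + 17*a^3*d + 8*a^2*c^2 + 48*a^2*c*d
        + 30*a^2*d^2 + 12*a*c^2*d + 54*a*c*d^2 + 12*c^2*d^2) :=
      mul_nonneg he (by positivity)
    have t2 : (0:ℝ) ≤ e^2 * (15*a^3 + 12*a^2*c + 20*a^2*d + 18*a*c*d + 24*a*d^2
        + 18*c*d^2) := mul_nonneg (by positivity) (by positivity)
    have t3 : (0:ℝ) ≤ e^3 * (4*a^2 + 6*a*d + 6*d^2) :=
      mul_nonneg (pow_nonneg he 3) (by positivity)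
    have key : a^4*c - a^4*d + 3*a^3*(a+e)^2 + 8*a^3*(a+e)*c - 5*a^3*(a+e)*d + 4*a^2*(a+e)^3 + 12*a^2*(a+e)^2*c +
        2*a^2*(a+e)^2*d + 8*a^2*(a+e)*c^2 + 12*a^2*(a+e)*c*d - 4*a^2*c^2*d + 4*a^2*c*d^2 +
        6*a*(a+e)^3*d + 18*a*(a+e)^2*c*d + 6*a*(a+e)^2*d^2 + 12*a*(a+e)*c^2*d + 18*a*(a+e)*c*d^2 +
        6*(a+e)^3*d^2 + 18*(a+e)^2*c*d^2 + 12*(a+e)*c^2*d^2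
      = (7*a^5 + 21*a^4*c + 2*a^4*d + 8*a^3*c^2 + 30*a^3*c*d + 12*a^3*d^2
        + 8*a^2*c^2*d + 40*a^2*c*d^2 + 12*a*c^2*d^2)
      + e * (18*a^4 + 32*a^3*c + 17*a^3*d + 8*a^2*c^2 + 48*a^2*c*d
        + 30*a^2*d^2 + 12*a*c^2*d + 54*a*c*d^2 + 12*c^2*d^2)
      + e^2 * (15*a^3 + 12*a^2*c + 20*a^2*d + 18*a*c*d + 24*a*d^2 + 18*c*d^2)
      + e^3 * (4*a^2 + 6*a*d + 6*d^2) := by ring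
    rw [key] at h1
    linarith [hQ0, t1, t2, t3]
  · -- case b ≤ a : 3a·f₁ + f₂ > 0
    obtain ⟨e, he, rfl⟩ : ∃ e, 0 ≤ e ∧ a = b + e := ⟨a - b, by linarith, by ring⟩
    have h3 : (3*(b+e)) * ((b+e)^4*c - (b+e)^4*d + 3*(b+e)^3*b^2 + 8*(b+e)^3*b*c - 5*(b+e)^3*b*d + 4*(b+e)^2*b^3 + 12*(b+e)^2*b^2*c +
        2*(b+e)^2*b^2*d + 8*(b+e)^2*b*c^2 + 12*(b+e)^2*b*c*d - 4*(b+e)^2*c^2*d + 4*(b+e)^2*c*d^2 +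
        6*(b+e)*b^3*d + 18*(b+e)*b^2*c*d + 6*(b+e)*b^2*d^2 + 12*(b+e)*b*c^2*d + 18*(b+e)*b*c*d^2 +
        6*b^3*d^2 + 18*b^2*c*d^2 + 12*b*c^2*d^2) ≤ 0 :=
      mul_nonpos_of_nonneg_of_nonpos (by positivity) h1
    have hP0 : (0:ℝ) < 28*b^6 + 120*b^5*d + 36*b^4*c^2 + 120*b^4*c*d + 72*b^4*d^2
        + 144*b^3*c^2*d + 48*b^3*c*d^2 + 72*b^2*c^2*d^2 := by positivity
    have t1 : (0:ℝ) ≤ e * (96*b^5 + 36*b^4*c + 276*b^4*d + 108*b^3*c^2 + 288*b^3*c*d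
        + 108*b^3*d^2 + 252*b^2*c^2*d + 108*b^2*c*d^2 + 72*b*c^2*d^2) :=
      mul_nonneg he (by positivity)
    have t2 : (0:ℝ) ≤ e^2 * (120*b^4 + 84*b^3*c + 204*b^3*d + 108*b^2*c^2 + 216*b^2*c*d
        + 36*b^2*d^2 + 108*b*c^2*d + 36*b*c*d^2) :=
      mul_nonneg (by positivity) (by positivity)
    have t3 : (0:ℝ) ≤ e^3 * (64*b^3 + 60*b^2*c + 48*b^2*d + 36*b*c^2 + 48*b*c*d) :=
      mul_nonneg (pow_nonneg he 3) (by positivity)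
    have t4 : (0:ℝ) ≤ e^4 * (12*b^2 + 12*b*c) :=
      mul_nonneg (pow_nonneg he 4) (by positivity)
    have key : (3*(b+e)) * ((b+e)^4*c - (b+e)^4*d + 3*(b+e)^3*b^2 + 8*(b+e)^3*b*c - 5*(b+e)^3*b*d + 4*(b+e)^2*b^3 + 12*(b+e)^2*b^2*c +
        2*(b+e)^2*b^2*d + 8*(b+e)^2*b*c^2 + 12*(b+e)^2*b*c*d - 4*(b+e)^2*c^2*d + 4*(b+e)^2*c*d^2 +
        6*(b+e)*b^3*d + 18*(b+e)*b^2*c*d + 6*(b+e)*b^2*d^2 + 12*(b+e)*b*c^2*d + 18*(b+e)*b*c*d^2 +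
        6*b^3*d^2 + 18*b^2*c*d^2 + 12*b*c^2*d^2)
      + (-3*(b+e)^5*c + 3*(b+e)^5*d + 3*(b+e)^4*b^2 - 12*(b+e)^4*b*c + 15*(b+e)^4*b*d + 4*(b+e)^3*b^3 -
        24*(b+e)^3*b^2*c + 42*(b+e)^3*b^2*d + 12*(b+e)^3*b*c^2 + 12*(b+e)^3*b*c*d + 12*(b+e)^3*c^2*d -
        12*(b+e)^3*c*d^2 - 24*(b+e)^2*b^3*c + 42*(b+e)^2*b^3*d + 18*(b+e)^2*b^2*c*d + 18*(b+e)^2*b^2*d^2 +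
        72*(b+e)^2*b*c^2*d - 18*(b+e)^2*b*c*d^2 + 12*(b+e)*b^4*d + 18*(b+e)*b^3*d^2 + 36*(b+e)*b^2*c^2*d -
        18*(b+e)*b^2*c*d^2 + 36*(b+e)*b*c^2*d^2 - 24*b^3*c*d^2)
      = (28*b^6 + 120*b^5*d + 36*b^4*c^2 + 120*b^4*c*d + 72*b^4*d^2
        + 144*b^3*c^2*d + 48*b^3*c*d^2 + 72*b^2*c^2*d^2)
      + e * (96*b^5 + 36*b^4*c + 276*b^4*d + 108*b^3*c^2 + 288*b^3*c*d
        + 108*b^3*d^2 + 252*b^2*c^2*d + 108*b^2*c*d^2 + 72*b*c^2*d^2)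
      + e^2 * (120*b^4 + 84*b^3*c + 204*b^3*d + 108*b^2*c^2 + 216*b^2*c*d
        + 36*b^2*d^2 + 108*b*c^2*d + 36*b*c*d^2)
      + e^3 * (64*b^3 + 60*b^2*c + 48*b^2*d + 36*b*c^2 + 48*b*c*d)
      + e^4 * (12*b^2 + 12*b*c) := by ring
    linarith [h2, h3, hP0, t1, t2, t3, t4, key]
end

section
/- For all real numbers a, b, c, d with a > 0, b > 0, d > 0 and a ≥ c ≥ 0, the polynomial h(a,b,c,d) = 12a^2bc^3 + 36a^2bc^2d + 36a^2bcd^2 + 12a^2bd^3 + 18ab^2c^2d + 18ab^2cd^2 + 12ab^2d^3 + 36abc^3d + 90abc^2d^2 + 72abcd^3 + 24abd^4 + 12ac^3d^2 + 18ac^2d^3 + 9acd^4 + 3ad^5 - 6b^2cd^3 + 12bc^3d^2 + 18bc^2d^3 + 6bcd^4 + 3bd^5 + 8c^3d^3 + 9c^2d^4 + 3cd^5 + d^6 is strictly positive. -/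
theorem stmt_18 (a b c d : ℝ) (ha : 0 < a) (hb : 0 < b) (hd : 0 < d)
    (hc : 0 ≤ c) (hac : c ≤ a) :
    0 < 12*a^2*b*c^3 + 36*a^2*b*c^2*d + 36*a^2*b*c*d^2 + 12*a^2*b*d^3 +
        18*a*b^2*c^2*d + 18*a*b^2*c*d^2 + 12*a*b^2*d^3 + 36*a*b*c^3*d +
        90*a*b*c^2*d^2 + 72*a*b*c*d^3 + 24*a*b*d^4 + 12*a*c^3*d^2 + 18*a*c^2*d^3 +
        9*a*c*d^4 + 3*a*d^5 - 6*b^2*c*d^3 + 12*b*c^3*d^2 + 18*b*c^2*d^3 +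
        6*b*c*d^4 + 3*b*d^5 + 8*c^3*d^3 + 9*c^2*d^4 + 3*c*d^5 + d^6 := by
  obtain ⟨e, he, rfl⟩ : ∃ e, 0 ≤ e ∧ a = c + e := ⟨a - c, by linarith, by ring⟩
  have t0 : (0:ℝ) ≤ 18*b^2*c^3*d := (mul_nonneg (mul_nonneg (mul_nonneg (by norm_num : (0:ℝ) ≤ 18) (pow_nonneg hb.le 2)) (pow_nonneg hc 3)) (hd.le))
  have t1 : (0:ℝ) ≤ 18*b^2*c^2*d^2 := (mul_nonneg (mul_nonneg (mul_nonneg (by norm_num : (0:ℝ) ≤ 18) (pow_nonneg hb.le 2)) (pow_nonneg hc 2)) (pow_nonneg hd.le 2))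
  have t2 : (0:ℝ) ≤ 18*b^2*c^2*d*e := (mul_nonneg (mul_nonneg (mul_nonneg (mul_nonneg (by norm_num : (0:ℝ) ≤ 18) (pow_nonneg hb.le 2)) (pow_nonneg hc 2)) (hd.le)) (he))
  have t3 : (0:ℝ) ≤ 6*b^2*c*d^3 := (mul_nonneg (mul_nonneg (mul_nonneg (by norm_num : (0:ℝ) ≤ 6) (pow_nonneg hb.le 2)) (hc)) (pow_nonneg hd.le 3))
  have t4 : (0:ℝ) ≤ 18*b^2*c*d^2*e := (mul_nonneg (mul_nonneg (mul_nonneg (mul_nonneg (by norm_num : (0:ℝ) ≤ 18) (pow_nonneg hb.le 2)) (hc)) (pow_nonneg hd.le 2)) (he))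
  have t5 : (0:ℝ) ≤ 12*b^2*d^3*e := (mul_nonneg (mul_nonneg (mul_nonneg (by norm_num : (0:ℝ) ≤ 12) (pow_nonneg hb.le 2)) (pow_nonneg hd.le 3)) (he))
  have t6 : (0:ℝ) ≤ 12*b*c^5 := (mul_nonneg (mul_nonneg (by norm_num : (0:ℝ) ≤ 12) (hb.le)) (pow_nonneg hc 5))
  have t7 : (0:ℝ) ≤ 72*b*c^4*d := (mul_nonneg (mul_nonneg (mul_nonneg (by norm_num : (0:ℝ) ≤ 72) (hb.le)) (pow_nonneg hc 4)) (hd.le))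
  have t8 : (0:ℝ) ≤ 24*b*c^4*e := (mul_nonneg (mul_nonneg (mul_nonneg (by norm_num : (0:ℝ) ≤ 24) (hb.le)) (pow_nonneg hc 4)) (he))
  have t9 : (0:ℝ) ≤ 138*b*c^3*d^2 := (mul_nonneg (mul_nonneg (mul_nonneg (by norm_num : (0:ℝ) ≤ 138) (hb.le)) (pow_nonneg hc 3)) (pow_nonneg hd.le 2))
  have t10 : (0:ℝ) ≤ 108*b*c^3*d*e := (mul_nonneg (mul_nonneg (mul_nonneg (mul_nonneg (by norm_num : (0:ℝ) ≤ 108) (hb.le)) (pow_nonneg hc 3)) (hd.le)) (he))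
  have t11 : (0:ℝ) ≤ 12*b*c^3*e^2 := (mul_nonneg (mul_nonneg (mul_nonneg (by norm_num : (0:ℝ) ≤ 12) (hb.le)) (pow_nonneg hc 3)) (pow_nonneg he 2))
  have t12 : (0:ℝ) ≤ 102*b*c^2*d^3 := (mul_nonneg (mul_nonneg (mul_nonneg (by norm_num : (0:ℝ) ≤ 102) (hb.le)) (pow_nonneg hc 2)) (pow_nonneg hd.le 3))
  have t13 : (0:ℝ) ≤ 162*b*c^2*d^2*e := (mul_nonneg (mul_nonneg (mul_nonneg (mul_nonneg (by norm_num : (0:ℝ) ≤ 162) (hb.le)) (pow_nonneg hc 2)) (pow_nonneg hd.le 2)) (he))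
  have t14 : (0:ℝ) ≤ 36*b*c^2*d*e^2 := (mul_nonneg (mul_nonneg (mul_nonneg (mul_nonneg (by norm_num : (0:ℝ) ≤ 36) (hb.le)) (pow_nonneg hc 2)) (hd.le)) (pow_nonneg he 2))
  have t15 : (0:ℝ) ≤ 30*b*c*d^4 := (mul_nonneg (mul_nonneg (mul_nonneg (by norm_num : (0:ℝ) ≤ 30) (hb.le)) (hc)) (pow_nonneg hd.le 4))
  have t16 : (0:ℝ) ≤ 96*b*c*d^3*e := (mul_nonneg (mul_nonneg (mul_nonneg (mul_nonneg (by norm_num : (0:ℝ) ≤ 96) (hb.le)) (hc)) (pow_nonneg hd.le 3)) (he))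
  have t17 : (0:ℝ) ≤ 36*b*c*d^2*e^2 := (mul_nonneg (mul_nonneg (mul_nonneg (mul_nonneg (by norm_num : (0:ℝ) ≤ 36) (hb.le)) (hc)) (pow_nonneg hd.le 2)) (pow_nonneg he 2))
  have t18 : (0:ℝ) ≤ 3*b*d^5 := (mul_nonneg (mul_nonneg (by norm_num : (0:ℝ) ≤ 3) (hb.le)) (pow_nonneg hd.le 5))
  have t19 : (0:ℝ) ≤ 24*b*d^4*e := (mul_nonneg (mul_nonneg (mul_nonneg (by norm_num : (0:ℝ) ≤ 24) (hb.le)) (pow_nonneg hd.le 4)) (he))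
  have t20 : (0:ℝ) ≤ 12*b*d^3*e^2 := (mul_nonneg (mul_nonneg (mul_nonneg (by norm_num : (0:ℝ) ≤ 12) (hb.le)) (pow_nonneg hd.le 3)) (pow_nonneg he 2))
  have t21 : (0:ℝ) ≤ 12*c^4*d^2 := (mul_nonneg (mul_nonneg (by norm_num : (0:ℝ) ≤ 12) (pow_nonneg hc 4)) (pow_nonneg hd.le 2))
  have t22 : (0:ℝ) ≤ 26*c^3*d^3 := (mul_nonneg (mul_nonneg (by norm_num : (0:ℝ) ≤ 26) (pow_nonneg hc 3)) (pow_nonneg hd.le 3))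
  have t23 : (0:ℝ) ≤ 12*c^3*d^2*e := (mul_nonneg (mul_nonneg (mul_nonneg (by norm_num : (0:ℝ) ≤ 12) (pow_nonneg hc 3)) (pow_nonneg hd.le 2)) (he))
  have t24 : (0:ℝ) ≤ 18*c^2*d^4 := (mul_nonneg (mul_nonneg (by norm_num : (0:ℝ) ≤ 18) (pow_nonneg hc 2)) (pow_nonneg hd.le 4))
  have t25 : (0:ℝ) ≤ 18*c^2*d^3*e := (mul_nonneg (mul_nonneg (mul_nonneg (by norm_num : (0:ℝ) ≤ 18) (pow_nonneg hc 2)) (pow_nonneg hd.le 3)) (he))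
  have t26 : (0:ℝ) ≤ 6*c*d^5 := (mul_nonneg (mul_nonneg (by norm_num : (0:ℝ) ≤ 6) (hc)) (pow_nonneg hd.le 5))
  have t27 : (0:ℝ) ≤ 9*c*d^4*e := (mul_nonneg (mul_nonneg (mul_nonneg (by norm_num : (0:ℝ) ≤ 9) (hc)) (pow_nonneg hd.le 4)) (he))
  have t28 : (0:ℝ) ≤ 1*d^6 := (mul_nonneg (by norm_num : (0:ℝ) ≤ 1) (pow_nonneg hd.le 6))
  have t29 : (0:ℝ) ≤ 3*d^5*e := (mul_nonneg (mul_nonneg (by norm_num : (0:ℝ) ≤ 3) (pow_nonneg hd.le 5)) (he))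
  have hd6 : (0:ℝ) < d^6 := pow_pos hd 6
  have key : 12*(c+e)^2*b*c^3 + 36*(c+e)^2*b*c^2*d + 36*(c+e)^2*b*c*d^2 + 12*(c+e)^2*b*d^3 +
        18*(c+e)*b^2*c^2*d + 18*(c+e)*b^2*c*d^2 + 12*(c+e)*b^2*d^3 + 36*(c+e)*b*c^3*d +
        90*(c+e)*b*c^2*d^2 + 72*(c+e)*b*c*d^3 + 24*(c+e)*b*d^4 + 12*(c+e)*c^3*d^2 + 18*(c+e)*c^2*d^3 +
        9*(c+e)*c*d^4 + 3*(c+e)*d^5 - 6*b^2*c*d^3 + 12*b*c^3*d^2 + 18*b*c^2*d^3 +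
        6*b*c*d^4 + 3*b*d^5 + 8*c^3*d^3 + 9*c^2*d^4 + 3*c*d^5 + d^6 = 18*b^2*c^3*d + 18*b^2*c^2*d^2 + 18*b^2*c^2*d*e + 6*b^2*c*d^3 + 18*b^2*c*d^2*e + 12*b^2*d^3*e + 12*b*c^5 + 72*b*c^4*d + 24*b*c^4*e + 138*b*c^3*d^2 + 108*b*c^3*d*e + 12*b*c^3*e^2 + 102*b*c^2*d^3 + 162*b*c^2*d^2*e + 36*b*c^2*d*e^2 + 30*b*c*d^4 + 96*b*c*d^3*e + 36*b*c*d^2*e^2 + 3*b*d^5 + 24*b*d^4*e + 12*b*d^3*e^2 + 12*c^4*d^2 + 26*c^3*d^3 + 12*c^3*d^2*e + 18*c^2*d^4 + 18*c^2*d^3*e + 6*c*d^5 + 9*c*d^4*e + 1*d^6 + 3*d^5*e := by ring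
  rw [key]
  linarith [t0,t1,t2,t3,t4,t5,t6,t7,t8,t9,t10,t11,t12,t13,t14,t15,t16,t17,t18,t19,t20,t21,t22,t23,t24,t25,t26,t27,t28,t29,hd6]
end

section
/- For all positive real numbers a, b, c, d, the polynomial f(a,b,c,d) = 3a^5d + 3a^4b^2 + 18a^4bd + 3a^4c^2 + 18a^4cd + 4a^3b^3 + 12a^3b^2c + 30a^3b^2d + 12a^3bc^2 + 84a^3bcd + 6a^3bd^2 + 4a^3c^3 + 30a^3c^2d + 6a^3cd^2 + 12a^2b^3c + 12a^2b^3d + 36a^2b^2c^2 + 108a^2b^2cd + 12a^2bc^3 + 108a^2bc^2d + 36a^2bcd^2 + 12a^2c^3d + 24ab^3c^2 + 36ab^3cd + 24ab^2c^3 + 90ab^2c^2d + 18ab^2cd^2 + 36abc^3d + 18abc^2d^2 + 12b^3c^3 + 12b^3c^2d + 12b^2c^3d is strictly positive, and consequently -f(a,b,c,d)/(a^3+3a^2b+3a^2c+3a^2d+3ab^2+6abc+6abd+3ac^2+6acd+3b^2c+3bc^2+6bcd)^2 is strictly negative. -/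
set_option maxHeartbeats 1000000


theorem stmt_19 (a b c d : ℝ) (ha : 0 < a) (hb : 0 < b) (hc : 0 < c) (hd : 0 < d) :
    0 < 3*a^5*d + 3*a^4*b^2 + 18*a^4*b*d + 3*a^4*c^2 + 18*a^4*c*d + 4*a^3*b^3 +
        12*a^3*b^2*c + 30*a^3*b^2*d + 12*a^3*b*c^2 + 84*a^3*b*c*d + 6*a^3*b*d^2 +
        4*a^3*c^3 + 30*a^3*c^2*d + 6*a^3*c*d^2 + 12*a^2*b^3*c + 12*a^2*b^3*d +
        36*a^2*b^2*c^2 + 108*a^2*b^2*c*d + 12*a^2*b*c^3 + 108*a^2*b*c^2*d +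
        36*a^2*b*c*d^2 + 12*a^2*c^3*d + 24*a*b^3*c^2 + 36*a*b^3*c*d + 24*a*b^2*c^3 +
        90*a*b^2*c^2*d + 18*a*b^2*c*d^2 + 36*a*b*c^3*d + 18*a*b*c^2*d^2 +
        12*b^3*c^3 + 12*b^3*c^2*d + 12*b^2*c^3*d ∧
    -(3*a^5*d + 3*a^4*b^2 + 18*a^4*b*d + 3*a^4*c^2 + 18*a^4*c*d + 4*a^3*b^3 +
        12*a^3*b^2*c + 30*a^3*b^2*d + 12*a^3*b*c^2 + 84*a^3*b*c*d + 6*a^3*b*d^2 +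
        4*a^3*c^3 + 30*a^3*c^2*d + 6*a^3*c*d^2 + 12*a^2*b^3*c + 12*a^2*b^3*d +
        36*a^2*b^2*c^2 + 108*a^2*b^2*c*d + 12*a^2*b*c^3 + 108*a^2*b*c^2*d +
        36*a^2*b*c*d^2 + 12*a^2*c^3*d + 24*a*b^3*c^2 + 36*a*b^3*c*d + 24*a*b^2*c^3 +
        90*a*b^2*c^2*d + 18*a*b^2*c*d^2 + 36*a*b*c^3*d + 18*a*b*c^2*d^2 +
        12*b^3*c^3 + 12*b^3*c^2*d + 12*b^2*c^3*d) /
      (a^3 + 3*a^2*b + 3*a^2*c + 3*a^2*d + 3*a*b^2 + 6*a*b*c + 6*a*b*d + 3*a*c^2 +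
        6*a*c*d + 3*b^2*c + 3*b*c^2 + 6*b*c*d)^2 < 0 := by
  constructor
  · positivity
  · apply div_neg_of_neg_of_pos
    · have : (0:ℝ) < 3*a^5*d + 3*a^4*b^2 + 18*a^4*b*d + 3*a^4*c^2 + 18*a^4*c*d + 4*a^3*b^3 +
        12*a^3*b^2*c + 30*a^3*b^2*d + 12*a^3*b*c^2 + 84*a^3*b*c*d + 6*a^3*b*d^2 +
        4*a^3*c^3 + 30*a^3*c^2*d + 6*a^3*c*d^2 + 12*a^2*b^3*c + 12*a^2*b^3*d +
        36*a^2*b^2*c^2 + 108*a^2*b^2*c*d + 12*a^2*b*c^3 + 108*a^2*b*c^2*d +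
        36*a^2*b*c*d^2 + 12*a^2*c^3*d + 24*a*b^3*c^2 + 36*a*b^3*c*d + 24*a*b^2*c^3 +
        90*a*b^2*c^2*d + 18*a*b^2*c*d^2 + 36*a*b*c^3*d + 18*a*b*c^2*d^2 +
        12*b^3*c^3 + 12*b^3*c^2*d + 12*b^2*c^3*d := by positivity
      linarith
    · positivity
end
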